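/- Let f be a Boolean formula with constraint set C, weights w_c > 0, and objective F_f(x) = Σ_{c∈C} w_c·WE_c(x) where each WE_c is the multilinear Walsh expansion of constraint c taking values in [−1,1] on [−1,1]^n. Then min_{x∈[−1,1]^n} F_f(x) = −Σ_{c∈C} w_c if and only if there exists a Boolean assignment (a point in {−1,1}^n) satisfying all constraints simultaneously. -/
import Mathlib


/-- The ±1 encoding of a Boolean: `true ↦ -1` (True), `false ↦ 1` (False). -/
def toPM (b : Bool) : ℝ := if b then -1 else 1

/-- Walsh coefficient `f̂(S) = 2^{-n} Σ_{x ∈ {-1,1}^n} f(x) ∏_{i∈S} x_i`. -/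
noncomputable def walshCoeff (n : ℕ) (f : (Fin n → Bool) → ℝ) (S : Finset (Fin n)) : ℝ :=
  (2 ^ n : ℝ)⁻¹ * ∑ x : Fin n → Bool, f x * ∏ i ∈ S, toPM (x i)

/-- Multilinear (Walsh) extension of a function on the hypercube. -/
noncomputable def mlext (n : ℕ) (f : (Fin n → Bool) → ℝ) (x : Fin n → ℝ) : ℝ :=
  ∑ S : Finset (Fin n), walshCoeff n f S * ∏ i ∈ S, x i

noncomputable def pwt (n : ℕ) (x : Fin n → ℝ) (a : Fin n → Bool) : ℝ :=
  (2 ^ n : ℝ)⁻¹ * ∏ i, (1 + toPM (a i) * x i)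

lemma mlext_eq (n : ℕ) (f : (Fin n → Bool) → ℝ) (x : Fin n → ℝ) :
    mlext n f x = ∑ a : Fin n → Bool, f a * pwt n x a := by
  have hprod : ∀ a : Fin n → Bool,
      ∑ S : Finset (Fin n), (∏ i ∈ S, toPM (a i)) * ∏ i ∈ S, x i
        = ∏ i, (1 + toPM (a i) * x i) := by
    intro a
    have h1 : (∏ i, (1 + toPM (a i) * x i)) = ∏ i, (toPM (a i) * x i + 1) := by
      simp [add_comm]
    rw [h1, Finset.prod_add]
    simp [Finset.powerset_univ, Finset.prod_mul_distrib]
  calc mlext n f x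
      = ∑ S : Finset (Fin n), ∑ a : Fin n → Bool,
          (2 ^ n : ℝ)⁻¹ * (f a * ((∏ i ∈ S, toPM (a i)) * ∏ i ∈ S, x i)) := by
        unfold mlext walshCoeff
        refine Finset.sum_congr rfl fun S _ => ?_
        rw [Finset.mul_sum, Finset.sum_mul]
        exact Finset.sum_congr rfl fun a _ => by ring
    _ = ∑ a : Fin n → Bool, (2 ^ n : ℝ)⁻¹ *
          (f a * ∑ S : Finset (Fin n), (∏ i ∈ S, toPM (a i)) * ∏ i ∈ S, x i) := by
        rw [Finset.sum_comm]
        exact Finset.sum_congr rfl fun a _ => by rw [Finset.mul_sum, Finset.mul_sum]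
    _ = ∑ a : Fin n → Bool, f a * pwt n x a := by
        refine Finset.sum_congr rfl fun a _ => ?_
        rw [hprod a]; unfold pwt; ring

lemma sum_pwt (n : ℕ) (x : Fin n → ℝ) : ∑ a : Fin n → Bool, pwt n x a = 1 := by
  unfold pwt
  rw [← Finset.mul_sum]
  have h : ∑ a : Fin n → Bool, ∏ i, (1 + toPM (a i) * x i) = (2 : ℝ) ^ n := by
    have key := Finset.prod_univ_sum (fun _ : Fin n => (Finset.univ : Finset Bool))
      (fun i b => 1 + toPM b * x i)
    rw [Fintype.piFinset_univ] at key
    rw [← key]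
    have h2 : ∀ i ∈ (Finset.univ : Finset (Fin n)),
        (∑ b ∈ (Finset.univ : Finset Bool), (1 + toPM b * x i)) = 2 := by
      intro i _; simp [toPM]; ring
    rw [Finset.prod_congr rfl h2, Finset.prod_const]
    simp
  rw [h]
  have : (2 : ℝ) ^ n ≠ 0 := by positivity
  field_simp

lemma pwt_nonneg (n : ℕ) (x : Fin n → ℝ) (hx : ∀ j, x j ∈ Set.Icc (-1 : ℝ) 1)
    (a : Fin n → Bool) : 0 ≤ pwt n x a := by
  unfold pwt
  apply mul_nonneg (by positivity)
  apply Finset.prod_nonneg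
  intro i _
  obtain ⟨h1, h2⟩ := hx i
  cases a i <;> simp [toPM] <;> linarith

lemma pwt_diag (n : ℕ) (a b : Fin n → Bool) :
    pwt n (fun i => toPM (a i)) b = if b = a then 1 else 0 := by
  unfold pwt
  by_cases h : b = a
  · subst h
    simp only [if_pos rfl]
    have h2 : ∀ i ∈ (Finset.univ : Finset (Fin n)), (1 + toPM (b i) * toPM (b i)) = 2 := by
      intro i _; cases b i <;> norm_num [toPM]
    rw [Finset.prod_congr rfl h2, Finset.prod_const]
    have : (2 : ℝ) ^ n ≠ 0 := by positivity
    simp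
  · simp only [if_neg h]
    obtain ⟨i, hi⟩ : ∃ i, b i ≠ a i := by
      by_contra hcon; push_neg at hcon; exact h (funext hcon)
    have h0 : (1 + toPM (b i) * toPM (a i)) = 0 := by
      cases hb : b i <;> cases ha : a i <;> simp_all [toPM]
    rw [Finset.prod_eq_zero (Finset.mem_univ i) h0, mul_zero]

lemma mlext_bool (n : ℕ) (f : (Fin n → Bool) → ℝ) (a : Fin n → Bool) :
    mlext n f (fun i => toPM (a i)) = f a := by
  rw [mlext_eq]
  rw [Finset.sum_congr rfl fun b _ => by rw [pwt_diag n a b]]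
  simp

lemma mlext_ge (n : ℕ) (f : (Fin n → Bool) → ℝ) (hf : ∀ a, -1 ≤ f a)
    (x : Fin n → ℝ) (hx : ∀ j, x j ∈ Set.Icc (-1 : ℝ) 1) : -1 ≤ mlext n f x := by
  rw [mlext_eq]
  have h1 : ∑ a : Fin n → Bool, (-1 : ℝ) * pwt n x a = -1 := by
    rw [← Finset.mul_sum, sum_pwt]; ring
  rw [← h1]
  exact Finset.sum_le_sum fun a _ =>
    mul_le_mul_of_nonneg_right (hf a) (pwt_nonneg n x hx a)

theorem stmt13 (n : ℕ) (ι : Type) [Fintype ι] (c : ι → (Fin n → Bool) → ℝ)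
    (hc : ∀ i a, c i a = -1 ∨ c i a = 1) (w : ι → ℝ) (hw : ∀ i, 0 < w i) :
    IsLeast ((fun x => ∑ i, w i * mlext n (c i) x) ''
        {x : Fin n → ℝ | ∀ j, x j ∈ Set.Icc (-1 : ℝ) 1}) (-(∑ i, w i))
      ↔ ∃ a : Fin n → Bool, ∀ i, c i a = -1 := by
  have hcge : ∀ i a, (-1 : ℝ) ≤ c i a := by
    intro i a; rcases hc i a with h | h <;> rw [h] <;> norm_num
  have hlow : ∀ x : Fin n → ℝ, (∀ j, x j ∈ Set.Icc (-1 : ℝ) 1) →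
      -(∑ i, w i) ≤ ∑ i, w i * mlext n (c i) x := by
    intro x hx
    rw [← Finset.sum_neg_distrib]
    refine Finset.sum_le_sum fun i _ => ?_
    have := mlext_ge n (c i) (hcge i) x hx
    nlinarith [hw i]
  constructor
  · rintro ⟨⟨x, hx, hFx⟩, -⟩
    simp only at hFx
    -- each mlext n (c i) x = -1
    have hz : ∀ i ∈ (Finset.univ : Finset ι), w i * (mlext n (c i) x + 1) = 0 := by
      have hsum : ∑ i, w i * (mlext n (c i) x + 1) = 0 := by
        have : ∑ i, w i * (mlext n (c i) x + 1)
            = (∑ i, w i * mlext n (c i) x) + ∑ i, w i := by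
          rw [← Finset.sum_add_distrib]
          exact Finset.sum_congr rfl fun i _ => by ring
        rw [this, hFx]; ring
      have hnn : ∀ i ∈ (Finset.univ : Finset ι), 0 ≤ w i * (mlext n (c i) x + 1) := by
        intro i _
        have := mlext_ge n (c i) (hcge i) x hx
        nlinarith [hw i]
      exact (Finset.sum_eq_zero_iff_of_nonneg hnn).mp hsum
    have hm1 : ∀ i, mlext n (c i) x = -1 := by
      intro i
      have := hz i (Finset.mem_univ i)
      have hwi := hw i
      have : mlext n (c i) x + 1 = 0 := by
        rcases mul_eq_zero.mp this with h | h
        · exact absurd h (ne_of_gt hwi)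
        · exact h
      linarith
    -- find a with pwt > 0
    obtain ⟨a, -, ha⟩ : ∃ a ∈ (Finset.univ : Finset (Fin n → Bool)), pwt n x a ≠ 0 := by
      apply Finset.exists_ne_zero_of_sum_ne_zero
      rw [sum_pwt]; norm_num
    have hap : 0 < pwt n x a := lt_of_le_of_ne (pwt_nonneg n x hx a) (Ne.symm ha)
    refine ⟨a, fun i => ?_⟩
    have hsum0 : ∑ b : Fin n → Bool, (c i b + 1) * pwt n x b = 0 := by
      have he : ∑ b : Fin n → Bool, (c i b + 1) * pwt n x b
          = mlext n (c i) x + 1 := by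
        have hsplit : ∑ b : Fin n → Bool, (c i b + 1) * pwt n x b
            = (∑ b : Fin n → Bool, c i b * pwt n x b) + ∑ b : Fin n → Bool, pwt n x b := by
          rw [← Finset.sum_add_distrib]
          exact Finset.sum_congr rfl fun b _ => by ring
        rw [hsplit, ← mlext_eq, sum_pwt]
      rw [he, hm1 i]; ring
    have hnn : ∀ b ∈ (Finset.univ : Finset (Fin n → Bool)),
        0 ≤ (c i b + 1) * pwt n x b := by
      intro b _
      exact mul_nonneg (by linarith [hcge i b]) (pwt_nonneg n x hx b)
    have := (Finset.sum_eq_zero_iff_of_nonneg hnn).mp hsum0 a (Finset.mem_univ a)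
    rcases mul_eq_zero.mp this with h | h
    · linarith
    · exact absurd h (ne_of_gt hap)
  · rintro ⟨a, ha⟩
    constructor
    · refine ⟨fun i => toPM (a i), fun j => ?_, ?_⟩
      · rcases Bool.dichotomy (a j) with h | h <;> simp [toPM, h] <;> norm_num
      · simp only
        have : ∀ i, mlext n (c i) (fun j => toPM (a j)) = -1 := by
          intro i; rw [mlext_bool, ha i]
        rw [Finset.sum_congr rfl fun i _ => by rw [this i]]
        rw [← Finset.sum_neg_distrib]
        exact Finset.sum_congr rfl fun i _ => by ring
    · rintro y ⟨x, hx, rfl⟩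
      exact hlow x hx
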